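/- arXiv:2311.15501 — 3 statements merged into one kernel-verified Lean document; each statement's English description precedes it below -/
import Mathlib

section
/- The signed graph Γ_{1,r-2} on n vertices, obtained from an all-positive complete graph K_{n-1} by adding a new vertex joined by one negative edge and r-2 positive edges, has exactly n(n-1)/2 - (n - r) edges, is unbalanced, and contains no unbalanced signed complete subgraph on r+1 vertices. -/
open Matrix BigOperators

/-- `A` is the adjacency matrix of a signed graph: symmetric, zero diagonal,
entries in `{0, 1, -1}`. -/
def IsSignedAdj {n : ℕ} (A : Matrix (Fin n) (Fin n) ℝ) : Prop :=
  (∀ i j, A i j = A j i) ∧ (∀ i, A i i = 0) ∧ (∀ i j, A i j = 0 ∨ A i j = 1 ∨ A i j = -1)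

/-- The underlying simple graph of the signed graph with adjacency matrix `A`. -/
def graphOf {n : ℕ} (A : Matrix (Fin n) (Fin n) ℝ) : SimpleGraph (Fin n) where
  Adj i j := i ≠ j ∧ A i j ≠ 0 ∧ A j i ≠ 0
  symm := by constructor; intro i j h; exact ⟨h.1.symm, h.2.2, h.2.1⟩
  loopless := by constructor; intro i h; exact h.1 rfl

/-- The sign of a walk: the product of the signs of its edges. -/
def walkSign {n : ℕ} (A : Matrix (Fin n) (Fin n) ℝ) {G : SimpleGraph (Fin n)}
    {u v : Fin n} (w : G.Walk u v) : ℝ :=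
  (w.darts.map fun d => A d.fst d.snd).prod

/-- A signed graph is unbalanced if it has a cycle with sign `-1`. -/
def IsUnbalanced {n : ℕ} (A : Matrix (Fin n) (Fin n) ℝ) : Prop :=
  ∃ (u : Fin n) (w : (graphOf A).Walk u u), w.IsCycle ∧ walkSign A w = -1

/-- Every cycle contained in `S` is positive. -/
def IsBalancedOn {n : ℕ} (A : Matrix (Fin n) (Fin n) ℝ) (S : Set (Fin n)) : Prop :=
  ∀ (u : Fin n) (w : (graphOf A).Walk u u), w.IsCycle → (∀ v ∈ w.support, v ∈ S) →
    walkSign A w = 1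

/-- `S` spans a complete subgraph. -/
def IsCompleteOn {n : ℕ} (A : Matrix (Fin n) (Fin n) ℝ) (S : Set (Fin n)) : Prop :=
  ∀ i ∈ S, ∀ j ∈ S, i ≠ j → A i j ≠ 0

/-- `S` spans an unbalanced complete subgraph. -/
def UnbalancedCompleteOn {n : ℕ} (A : Matrix (Fin n) (Fin n) ℝ) (S : Set (Fin n)) : Prop :=
  IsCompleteOn A S ∧ ∃ (u : Fin n) (w : (graphOf A).Walk u u), w.IsCycle ∧
    (∀ v ∈ w.support, v ∈ S) ∧ walkSign A w = -1

/-- The signed graph contains no unbalanced complete subgraph on `k` vertices. -/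
def KminusFree {n : ℕ} (A : Matrix (Fin n) (Fin n) ℝ) (k : ℕ) : Prop :=
  ¬ ∃ S : Finset (Fin n), S.card = k ∧ UnbalancedCompleteOn A ↑S

/-- The largest eigenvalue of `A`. -/
noncomputable def lam1 {n : ℕ} (A : Matrix (Fin n) (Fin n) ℝ) : ℝ :=
  sSup {μ : ℝ | ∃ x : Fin n → ℝ, x ≠ 0 ∧ A.mulVec x = μ • x}

/-- The signed graph `Γ_{1,r-2}`: vertices `1,…,n-1` form an all-positive complete graph,
vertex `0` is joined to vertex `1` by a negative edge and to vertices `2,…,r-1`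
by positive edges. -/
def GammaMat (n r : ℕ) : Matrix (Fin n) (Fin n) ℝ :=
  Matrix.of fun i j =>
    if i = j then 0
    else if i.val = 0 then (if j.val = 1 then -1 else if j.val < r then 1 else 0)
    else if j.val = 0 then (if i.val = 1 then -1 else if i.val < r then 1 else 0)
    else 1

/-! The complement of the underlying graph of `GammaMat n r` is the star joining vertex `0` to the
vertices `r, …, n-1`, which gives the edge count. The triangle `0, 1, 2` carries exactly one
negative edge. A complete subgraph containing vertex `0` lies inside `{0, …, r-1}`, so it has at
most `r` vertices, while one avoiding vertex `0` has only positive edges and is balanced. -/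

open Finset

lemma Fin.card_filter_le_val {n r : ℕ} : #{j : Fin n | r ≤ j.val} = n - r := by
  have := Finset.card_filter_add_card_filter_not (s := Finset.univ) (fun j : Fin n => j.val < r)
  simp only [not_lt, Finset.card_univ, Fintype.card_fin, Fin.card_filter_val_lt] at this
  omega

namespace SimpleGraph

variable {V : Type*} {G : SimpleGraph V}

lemma Walk.isCycle_triangle {a b c : V} (hab : G.Adj a b) (hbc : G.Adj b c) (hca : G.Adj c a) :
    (Walk.cons hab (.cons hbc (.cons hca .nil))).IsCycle := by
  simp [Walk.isCycle_def, hab.ne, hbc.ne, hca.ne, hab.ne.symm, hca.ne.symm]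

lemma ncard_edgeSet_add_ncard_edgeSet_compl [Fintype V] (G : SimpleGraph V) :
    G.edgeSet.ncard + Gᶜ.edgeSet.ncard = (Fintype.card V).choose 2 := by
  classical
  rw [← card_edgeFinset_top_eq_card_choose_two, ← Set.ncard_coe_finset, coe_edgeFinset,
    ← Set.ncard_union_eq (disjoint_edgeSet.mpr disjoint_compl_right), ← edgeSet_sup,
    sup_compl_eq_top]

end SimpleGraph

section walkSign

variable {n : ℕ} (A : Matrix (Fin n) (Fin n) ℝ) {G : SimpleGraph (Fin n)}

lemma walkSign_triangle {a b c : Fin n} (hab : G.Adj a b) (hbc : G.Adj b c) (hca : G.Adj c a) :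
    walkSign A (.cons hab (.cons hbc (.cons hca .nil))) = A a b * (A b c * A c a) := by
  simp [walkSign]

lemma walkSign_eq_one {u v : Fin n} (w : G.Walk u v) (h : ∀ d ∈ w.darts, A d.fst d.snd = 1) :
    walkSign A w = 1 :=
  List.prod_eq_one <| by simpa using h

end walkSign

lemma graphOf_adj_iff {n : ℕ} {A : Matrix (Fin n) (Fin n) ℝ} (hA : A.IsSymm)
    (hdiag : ∀ i, A i i = 0) {i j : Fin n} : (graphOf A).Adj i j ↔ A i j ≠ 0 := by
  refine ⟨fun h => h.2.1, fun h => ⟨?_, h, hA.apply i j ▸ h⟩⟩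
  rintro rfl
  exact h (hdiag i)

namespace GammaMat

variable {n r : ℕ}

lemma isSymm : (GammaMat n r).IsSymm := by
  ext i j
  simp only [Matrix.transpose_apply, GammaMat, Matrix.of_apply, eq_comm (a := j)]
  split_ifs <;> first | rfl | omega

lemma apply_self (i : Fin n) : GammaMat n r i i = 0 := by
  simp [GammaMat]

lemma apply_eq_zero_iff (hr : 2 ≤ r) {i j : Fin n} :
    GammaMat n r i j = 0 ↔ i = j ∨ i.val = 0 ∧ r ≤ j.val ∨ j.val = 0 ∧ r ≤ i.val := by
  simp only [GammaMat, Matrix.of_apply, Fin.ext_iff]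
  split_ifs <;> norm_num <;> omega

lemma apply_eq_one {i j : Fin n} (hij : i ≠ j) (hi : i.val ≠ 0) (hj : j.val ≠ 0) :
    GammaMat n r i j = 1 := by
  simp [GammaMat, hij, hi, hj]

lemma compl_graphOf_adj_iff (hr : 2 ≤ r) {i j : Fin n} :
    (graphOf (GammaMat n r))ᶜ.Adj i j ↔ i.val = 0 ∧ r ≤ j.val ∨ j.val = 0 ∧ r ≤ i.val := by
  rw [SimpleGraph.compl_adj, graphOf_adj_iff isSymm apply_self, not_not, apply_eq_zero_iff hr,
    Fin.ne_iff_vne]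
  omega

lemma edgeSet_compl_graphOf (hr : 2 ≤ r) (hn : 0 < n) :
    (graphOf (GammaMat n r))ᶜ.edgeSet = (fun j => s(⟨0, hn⟩, j)) '' {j : Fin n | r ≤ j.val} := by
  ext e
  induction e using Sym2.ind with
  | _ i j =>
    simp only [SimpleGraph.mem_edgeSet, compl_graphOf_adj_iff hr, Set.mem_image,
      Set.mem_ofPred_eq, Sym2.eq_iff, Fin.ext_iff]
    constructor
    · rintro (⟨hi, hj⟩ | ⟨hj, hi⟩)
      · exact ⟨j, hj, .inl ⟨hi.symm, rfl⟩⟩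
      · exact ⟨i, hi, .inr ⟨hj.symm, rfl⟩⟩
    · rintro ⟨k, hk, ⟨hi, hj⟩ | ⟨hj, hi⟩⟩ <;> omega

lemma ncard_edgeSet_compl_graphOf (hr : 2 ≤ r) :
    (graphOf (GammaMat n r))ᶜ.edgeSet.ncard = n - r := by
  rcases Nat.eq_zero_or_pos n with rfl | hn
  · simp [Set.eq_empty_of_isEmpty]
  rw [edgeSet_compl_graphOf hr hn, Set.ncard_image_of_injective _ fun _ _ => Sym2.congr_right.mp,
    Set.ncard_eq_toFinset_card', Set.toFinset_ofPred, Fin.card_filter_le_val]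

lemma ncard_edgeSet_graphOf (hr : 2 ≤ r) :
    (graphOf (GammaMat n r)).edgeSet.ncard = n * (n - 1) / 2 - (n - r) := by
  have := (graphOf (GammaMat n r)).ncard_edgeSet_add_ncard_edgeSet_compl
  rw [ncard_edgeSet_compl_graphOf hr, Fintype.card_fin, Nat.choose_two_right] at this
  omega

lemma isUnbalanced (hr : 3 ≤ r) (hn : 3 ≤ n) : IsUnbalanced (GammaMat n r) := by
  let v₁ : Fin n := ⟨0, by omega⟩
  let v₂ : Fin n := ⟨1, by omega⟩
  let v₃ : Fin n := ⟨2, by omega⟩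
  have h₁₂ : GammaMat n r v₁ v₂ = -1 := by simp [GammaMat, v₁, v₂, Fin.ext_iff]
  have h₂₃ : GammaMat n r v₂ v₃ = 1 :=
    apply_eq_one (by simp [v₂, v₃, Fin.ext_iff]) one_ne_zero two_ne_zero
  have h₃₁ : GammaMat n r v₃ v₁ = 1 := by simp [GammaMat, v₁, v₃, Fin.ext_iff]; omega
  have adj {i j : Fin n} {s : ℝ} (h : GammaMat n r i j = s) (hs : s ≠ 0) :
      (graphOf (GammaMat n r)).Adj i j :=
    (graphOf_adj_iff isSymm apply_self).mpr (h ▸ hs)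
  refine ⟨v₁, _, SimpleGraph.Walk.isCycle_triangle (adj h₁₂ (by norm_num))
    (adj h₂₃ one_ne_zero) (adj h₃₁ one_ne_zero), ?_⟩
  rw [walkSign_triangle, h₁₂, h₂₃, h₃₁]
  norm_num

lemma isBalancedOn_ne_zero : IsBalancedOn (GammaMat n r) {j | j.val ≠ 0} := by
  intro u w _ hw
  refine walkSign_eq_one _ w fun d hd => apply_eq_one d.adj.ne ?_ ?_
  · exact hw _ (w.dart_fst_mem_support_of_mem_darts hd)
  · exact hw _ (w.dart_snd_mem_support_of_mem_darts hd)

lemma card_le_of_isCompleteOn (hr : 2 ≤ r) {S : Finset (Fin n)}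
    (hS : IsCompleteOn (GammaMat n r) S) {z : Fin n} (hzS : z ∈ S) (hz : z.val = 0) : S.card ≤ r := by
  have hsub : S ⊆ ({j | j.val < r} : Finset (Fin n)) := by
    intro j hj
    rw [Finset.mem_filter_univ]
    by_cases hjz : j = z
    · omega
    · have := hS z hzS j hj (Ne.symm hjz)
      rw [ne_eq, apply_eq_zero_iff hr] at this
      omega
  exact (Finset.card_le_card hsub).trans (Fin.card_filter_val_lt.trans_le (min_le_right _ _))

lemma kminusFree (hr : 2 ≤ r) : KminusFree (GammaMat n r) (r + 1) := by
  rintro ⟨S, hcard, hcomplete, u, w, hcycle, hsupp, hsign⟩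
  by_cases hz : ∃ z ∈ S, z.val = 0
  · obtain ⟨z, hzS, hz⟩ := hz
    have := card_le_of_isCompleteOn hr hcomplete hzS hz
    omega
  · push Not at hz
    have := isBalancedOn_ne_zero u w hcycle fun v hv => hz v (hsupp v hv)
    rw [hsign] at this
    norm_num at this

end GammaMat

/-- `Γ_{1,r-2}` has exactly `n(n-1)/2 - (n-r)` edges, is unbalanced, and contains
no unbalanced complete subgraph on `r+1` vertices. -/
theorem stmt1 {n r : ℕ} (hr : 3 ≤ r) (hrn : r ≤ n) :
    (graphOf (GammaMat n r)).edgeSet.ncard = n * (n - 1) / 2 - (n - r) ∧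
    IsUnbalanced (GammaMat n r) ∧ KminusFree (GammaMat n r) (r + 1) :=
  ⟨GammaMat.ncard_edgeSet_graphOf (by omega), GammaMat.isUnbalanced hr (hr.trans hrn),
    GammaMat.kminusFree (by omega)⟩
end

section
/- For any non-empty signed graph Γ on n vertices, the largest eigenvalue satisfies λ_1(Γ) ≤ n - 1, with equality if and only if Γ is balanced and complete. -/
open Matrix BigOperators

/-!
Let `A x = μ x` with `x ≠ 0` and pick a coordinate `i` where `|x i|` is maximal. Row `i` gives
`μ x_i² = ∑_{j ≠ i} x_i A_ij x_j ≤ (n - 1) x_i²`, so `μ ≤ n - 1`. For `μ = n - 1` every term is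
tight: `A_ij x_j = x_i`, hence `|x_j| = |x_i|` for all `j`, every coordinate is maximal, and
`A_jk = x_j / x_k` for all `j ≠ k`. Such a potential makes the graph complete and the sign of a
walk from `u` to `v` equal to `x_u / x_v`, so every cycle is positive. Conversely, in a balanced
complete signed graph all triangles are positive, so `x_k = A_{i₀k}` (with `x_{i₀} = 1`) is such a
potential, and then `A x = (n - 1) x`.
-/

open Finset

/-- `A j k = x j / x k` off the diagonal: `A` is the all-positive complete signed graph switched
by the signs of `x`. -/
structure IsCompleteSwitching {n : ℕ} (A : Matrix (Fin n) (Fin n) ℝ) (x : Fin n → ℝ) : Prop where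
  ne_zero : ∀ k, x k ≠ 0
  mul_eq : ∀ j k, j ≠ k → A j k * x k = x j

section

variable {n : ℕ} {A : Matrix (Fin n) (Fin n) ℝ}

lemma IsSignedAdj.abs_le_one (hA : IsSignedAdj A) (i j : Fin n) : |A i j| ≤ 1 := by
  rcases hA.2.2 i j with h | h | h <;> simp [h]

lemma IsSignedAdj.mul_self_eq_one (hA : IsSignedAdj A) {i j : Fin n} (h : A i j ≠ 0) :
    A i j * A i j = 1 := by
  rcases hA.2.2 i j with h' | h' | h' <;> simp_all

lemma cast_card_univ_erase (i : Fin n) : ((univ.erase i).card : ℝ) = n - 1 := by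
  rw [card_erase_of_mem (mem_univ i), card_univ, Fintype.card_fin, Nat.cast_pred i.pos]

lemma mulVec_apply_eq_sum_erase (hdiag : ∀ i, A i i = 0) (x : Fin n → ℝ) (i : Fin n) :
    (A *ᵥ x) i = ∑ j ∈ univ.erase i, A i j * x j := by
  rw [sum_erase _ (by simp [hdiag i])]
  rfl

lemma IsSignedAdj.mul_row_term_le_sq (hA : IsSignedAdj A) {x : Fin n → ℝ} {i j : Fin n}
    (hmax : |x j| ≤ |x i|) : x i * (A i j * x j) ≤ x i ^ 2 :=
  calc x i * (A i j * x j) ≤ |x i| * (|A i j| * |x j|) := by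
        rw [← abs_mul, ← abs_mul]; exact le_abs_self _
    _ ≤ |x i| * (1 * |x i|) := by gcongr; exact hA.abs_le_one i j
    _ = x i ^ 2 := by rw [one_mul, abs_mul_abs_self, sq]

lemma mul_sq_eq_sum_erase (hdiag : ∀ i, A i i = 0) {μ : ℝ} {x : Fin n → ℝ}
    (hAx : A *ᵥ x = μ • x) (i : Fin n) :
    μ * x i ^ 2 = ∑ j ∈ univ.erase i, x i * (A i j * x j) := by
  rw [← mul_sum, ← mulVec_apply_eq_sum_erase hdiag, hAx, Pi.smul_apply, smul_eq_mul]
  ring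

lemma IsSignedAdj.eigenvalue_le (hA : IsSignedAdj A) {μ : ℝ} {x : Fin n → ℝ} (hx : x ≠ 0)
    (hAx : A *ᵥ x = μ • x) : μ ≤ n - 1 := by
  obtain ⟨k, hk⟩ := Function.ne_iff.mp hx
  have : Nonempty (Fin n) := ⟨k⟩
  obtain ⟨i, hi⟩ := Finite.exists_max fun j => |x j|
  have hxi : 0 < x i ^ 2 := by
    rw [← sq_abs]; exact pow_pos ((abs_pos.mpr hk).trans_le (hi k)) 2
  refine le_of_mul_le_mul_right ?_ hxi
  calc μ * x i ^ 2 = ∑ j ∈ univ.erase i, x i * (A i j * x j) := mul_sq_eq_sum_erase hA.2.1 hAx i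
    _ ≤ ∑ j ∈ univ.erase i, x i ^ 2 := sum_le_sum fun j _ => hA.mul_row_term_le_sq (hi j)
    _ = (n - 1) * x i ^ 2 := by rw [sum_const, nsmul_eq_mul, cast_card_univ_erase]

lemma IsSignedAdj.mul_eq_of_forall_abs_le (hA : IsSignedAdj A) {x : Fin n → ℝ}
    (hAx : A *ᵥ x = ((n : ℝ) - 1) • x) {i j : Fin n} (hi : ∀ k, |x k| ≤ |x i|) (hxi : x i ≠ 0)
    (hji : j ≠ i) : A i j * x j = x i := by
  have hsum : ∑ k ∈ univ.erase i, x i * (A i k * x k) = ∑ k ∈ univ.erase i, x i ^ 2 := by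
    rw [← mul_sq_eq_sum_erase hA.2.1 hAx, sum_const, nsmul_eq_mul, cast_card_univ_erase]
  have hterm := (sum_eq_sum_iff_of_le fun k _ => hA.mul_row_term_le_sq (hi k)).mp hsum j
    (mem_erase.mpr ⟨hji, mem_univ j⟩)
  exact mul_left_cancel₀ hxi (hterm.trans (sq _))

lemma IsSignedAdj.isCompleteSwitching_of_eigenvalue (hA : IsSignedAdj A) {x : Fin n → ℝ}
    (hx : x ≠ 0) (hAx : A *ᵥ x = ((n : ℝ) - 1) • x) : IsCompleteSwitching A x := by
  obtain ⟨k, hk⟩ := Function.ne_iff.mp hx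
  have : Nonempty (Fin n) := ⟨k⟩
  obtain ⟨i, hi⟩ := Finite.exists_max fun j => |x j|
  have hxi : 0 < |x i| := (abs_pos.mpr hk).trans_le (hi k)
  have habs : ∀ j, |x j| = |x i| := by
    intro j
    rcases eq_or_ne j i with rfl | hji
    · rfl
    refine le_antisymm (hi j) ?_
    calc |x i| = |A i j| * |x j| := by
          rw [← abs_mul, hA.mul_eq_of_forall_abs_le hAx hi (abs_pos.mp hxi) hji]
      _ ≤ |x j| := mul_le_of_le_one_left (abs_nonneg _) (hA.abs_le_one i j)
  have hne : ∀ j, x j ≠ 0 := fun j => abs_pos.mp (habs j ▸ hxi)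
  exact ⟨hne, fun j k hjk =>
    hA.mul_eq_of_forall_abs_le hAx (fun l => ((habs l).trans (habs j).symm).le) (hne j) hjk.symm⟩

namespace IsCompleteSwitching

variable {x : Fin n → ℝ}

lemma apply_ne_zero (h : IsCompleteSwitching A x) {j k : Fin n} (hjk : j ≠ k) : A j k ≠ 0 :=
  fun h0 => h.ne_zero j (by rw [← h.mul_eq j k hjk, h0, zero_mul])

lemma mulVec_eq (h : IsCompleteSwitching A x) (hdiag : ∀ i, A i i = 0) :
    A *ᵥ x = ((n : ℝ) - 1) • x := by
  funext i
  rw [mulVec_apply_eq_sum_erase hdiag,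
    sum_congr rfl fun j hj => h.mul_eq i j (ne_of_mem_erase hj).symm,
    sum_const, nsmul_eq_mul, cast_card_univ_erase]
  rfl

lemma walkSign_mul {G : SimpleGraph (Fin n)} (h : IsCompleteSwitching A x) {u v : Fin n}
    (w : G.Walk u v) : walkSign A w * x v = x u := by
  induction w with
  | nil => simp [walkSign]
  | cons hadj w ih =>
    simp only [walkSign, SimpleGraph.Walk.darts_cons, List.map_cons, List.prod_cons] at ih ⊢
    rw [mul_assoc, ih, h.mul_eq _ _ hadj.ne]

lemma isBalancedOn (h : IsCompleteSwitching A x) (S : Set (Fin n)) : IsBalancedOn A S :=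
  fun u w _ _ => mul_right_cancel₀ (h.ne_zero u) ((h.walkSign_mul w).trans (one_mul _).symm)

end IsCompleteSwitching

lemma IsBalancedOn.mul_triangle_eq_one {S : Set (Fin n)} (h : IsBalancedOn A S) {a b c : Fin n}
    (ha : a ∈ S) (hb : b ∈ S) (hc : c ∈ S) (hab : (graphOf A).Adj a b)
    (hbc : (graphOf A).Adj b c) (hca : (graphOf A).Adj c a) :
    A a b * (A b c * A c a) = 1 := by
  let w : (graphOf A).Walk a a := .cons hab (.cons hbc (.cons hca .nil))
  have hcycle : w.IsCycle := by
    simp [w, SimpleGraph.Walk.cons_isCycle_iff, hab.ne, hab.ne.symm, hbc.ne, hca.ne, hca.ne.symm]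
  simpa [walkSign, w] using h a w hcycle (by simp [w, ha, hb, hc])

lemma IsSignedAdj.exists_isCompleteSwitching (hA : IsSignedAdj A) (hb : IsBalancedOn A Set.univ)
    (hc : ∀ i j : Fin n, i ≠ j → A i j ≠ 0) (i₀ : Fin n) : ∃ x, IsCompleteSwitching A x := by
  have adj : ∀ i j, i ≠ j → (graphOf A).Adj i j := fun i j h => ⟨h, hc i j h, hc j i h.symm⟩
  refine ⟨fun k => if k = i₀ then 1 else A i₀ k, fun k => ?_, fun j k hjk => ?_⟩
  · split_ifs with hk
    exacts [one_ne_zero, hc i₀ k (Ne.symm hk)]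
  rcases eq_or_ne j i₀ with rfl | hj
  · simp [hjk.symm, hA.mul_self_eq_one (hc j k hjk)]
  rcases eq_or_ne k i₀ with rfl | hk
  · simp [hj, hA.1 j k]
  have htri := hb.mul_triangle_eq_one (Set.mem_univ i₀) (Set.mem_univ j) (Set.mem_univ k)
    (adj i₀ j (Ne.symm hj)) (adj j k hjk) (adj k i₀ hk)
  simp only [hj, hk, if_false]
  calc A j k * A i₀ k = (A i₀ j * A i₀ j) * (A j k * A k i₀) := by
        rw [hA.mul_self_eq_one (hc i₀ j (Ne.symm hj)), hA.1 k i₀]; ring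
    _ = A i₀ j * (A i₀ j * (A j k * A k i₀)) := by ring
    _ = A i₀ j := by rw [htri, mul_one]

lemma finite_setOf_eigenvalue (A : Matrix (Fin n) (Fin n) ℝ) :
    {μ : ℝ | ∃ x : Fin n → ℝ, x ≠ 0 ∧ A *ᵥ x = μ • x}.Finite :=
  (Module.End.finite_hasEigenvalue (Matrix.toLin' A)).subset fun _ ⟨x, hx, hAx⟩ =>
    Module.End.hasEigenvalue_of_hasEigenvector
      ⟨Module.End.mem_eigenspace_iff.mpr (by simpa using hAx), hx⟩

lemma lam1_le {c : ℝ} (hub : ∀ μ x, x ≠ 0 → A *ᵥ x = μ • x → μ ≤ c) (hc : 0 ≤ c) :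
    lam1 A ≤ c :=
  Real.sSup_le (fun μ ⟨x, hx, hAx⟩ => hub μ x hx hAx) hc

/-- Nonzero `c` rules out the junk value `sSup ∅ = 0`. -/
lemma lam1_eq_iff {c : ℝ} (hub : ∀ μ x, x ≠ 0 → A *ᵥ x = μ • x → μ ≤ c) (hc : c ≠ 0) :
    lam1 A = c ↔ ∃ x : Fin n → ℝ, x ≠ 0 ∧ A *ᵥ x = c • x := by
  have hbdd : BddAbove {μ : ℝ | ∃ x : Fin n → ℝ, x ≠ 0 ∧ A *ᵥ x = μ • x} :=
    ⟨c, fun μ ⟨x, hx, hAx⟩ => hub μ x hx hAx⟩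
  constructor
  · intro heq
    have hne : {μ : ℝ | ∃ x : Fin n → ℝ, x ≠ 0 ∧ A *ᵥ x = μ • x}.Nonempty := by
      by_contra hempty
      rw [Set.not_nonempty_iff_eq_empty] at hempty
      rw [lam1, hempty, Real.sSup_empty] at heq
      exact hc heq.symm
    exact heq ▸ hne.csSup_mem (finite_setOf_eigenvalue A)
  · intro hmem
    exact le_antisymm (csSup_le ⟨c, hmem⟩ fun μ ⟨x, hx, hAx⟩ => hub μ x hx hAx) (le_csSup hbdd hmem)

end

/-- For a non-empty signed graph on `n` vertices, `λ₁ ≤ n - 1`, with equality iff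
the signed graph is balanced and complete. -/
theorem stmt11 {n : ℕ} (A : Matrix (Fin n) (Fin n) ℝ) (hA : IsSignedAdj A)
    (hne : ∃ i j, A i j ≠ 0) :
    lam1 A ≤ (n : ℝ) - 1 ∧
      (lam1 A = (n : ℝ) - 1 ↔
        (IsBalancedOn A Set.univ ∧ ∀ i j : Fin n, i ≠ j → A i j ≠ 0)) := by
  obtain ⟨i, j, hij⟩ := hne
  have : Nontrivial (Fin n) := nontrivial_of_ne i j fun h => hij (h ▸ hA.2.1 i)
  have hn : (1 : ℝ) ≤ n - 1 := by
    have := Fin.nontrivial_iff_two_le.mp this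
    rw [le_sub_iff_add_le]; exact_mod_cast this
  have hub := fun μ x (hx : x ≠ 0) (hAx : A *ᵥ x = μ • x) => hA.eigenvalue_le hx hAx
  refine ⟨lam1_le hub (by linarith), (lam1_eq_iff hub (by linarith)).trans ⟨?_, ?_⟩⟩
  · rintro ⟨x, hx, hAx⟩
    have h := hA.isCompleteSwitching_of_eigenvalue hx hAx
    exact ⟨h.isBalancedOn _, fun _ _ => h.apply_ne_zero⟩
  · rintro ⟨hb, hc⟩
    obtain ⟨x, h⟩ := hA.exists_isCompleteSwitching hb hc i
    exact ⟨x, fun h0 => h.ne_zero i (congrFun h0 i), h.mulVec_eq hA.2.1⟩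
end

section
/- Two signed graphs on the same underlying graph are switching equivalent if and only if they have the same set of balanced cycles. -/
open Matrix BigOperators

/-! Switching by `s` multiplies the sign of a walk from `u` to `v` by `s u * s v`, so it fixes the
sign of every closed walk. Conversely, if `A` and `B` have the same positive cycles, every cycle of
the signed graph `A ⊙ B` is positive. Each detour that `Walk.bypass` cuts out of a walk is a path
closed by one edge, hence positive, so every closed walk of `A ⊙ B` is positive too. The signs of
walks from a root of each component then give `s` with `A ⊙ B = s i * s j` on edges, i.e.
`B i j = s i * A i j * s j`. -/

open SimpleGraph

lemma mul_eq_one_of_iff_of_mul_self_eq_one {x y : ℝ} (hx : x * x = 1) (hy : y * y = 1)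
    (h : x = 1 ↔ y = 1) : x * y = 1 := by
  rcases mul_self_eq_one_iff.mp hx with rfl | rfl <;>
    rcases mul_self_eq_one_iff.mp hy with rfl | rfl <;> simp_all

section WalkSign

variable {n : ℕ} {G : SimpleGraph (Fin n)} {C : Matrix (Fin n) (Fin n) ℝ}

@[simp]
lemma walkSign_nil {u : Fin n} : walkSign C (Walk.nil : G.Walk u u) = 1 := rfl

@[simp]
lemma walkSign_cons {u v w : Fin n} (h : G.Adj u v) (p : G.Walk v w) :
    walkSign C (Walk.cons h p) = C u v * walkSign C p := by
  simp [walkSign]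

@[simp]
lemma walkSign_append {u v w : Fin n} (p : G.Walk u v) (q : G.Walk v w) :
    walkSign C (p.append q) = walkSign C p * walkSign C q := by
  simp [walkSign, Walk.darts_append]

@[simp]
lemma walkSign_copy {u v u' v' : Fin n} (p : G.Walk u v) (hu : u = u') (hv : v = v') :
    walkSign C (p.copy hu hv) = walkSign C p := by
  subst hu hv
  rfl

lemma walkSign_reverse (hsym : ∀ i j, C i j = C j i) {u v : Fin n} (p : G.Walk u v) :
    walkSign C p.reverse = walkSign C p := by
  simp only [walkSign, Walk.darts_reverse, List.map_reverse, List.prod_reverse, List.map_map]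
  exact congrArg List.prod (List.map_congr_left fun d _ => hsym d.snd d.fst)

lemma walkSign_mul_self_eq_one (hsq : ∀ i j, G.Adj i j → C i j * C i j = 1)
    {u v : Fin n} (p : G.Walk u v) : walkSign C p * walkSign C p = 1 := by
  induction p with
  | nil => simp
  | cons h p ih =>
    rw [walkSign_cons]
    linear_combination (walkSign C p) ^ 2 * hsq _ _ h + ih

lemma walkSign_hadamard (A B : Matrix (Fin n) (Fin n) ℝ) {u v : Fin n} (p : G.Walk u v) :
    walkSign (A ⊙ B) p = walkSign A p * walkSign B p := by
  simp only [walkSign, hadamard_apply, List.prod_map_mul]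

lemma walkSign_switch {A B : Matrix (Fin n) (Fin n) ℝ} {s : Fin n → ℝ}
    (hs : ∀ i, s i * s i = 1) (hB : ∀ i j, B i j = s i * A i j * s j)
    {u v : Fin n} (p : G.Walk u v) : walkSign B p = s u * walkSign A p * s v := by
  induction p with
  | nil => simpa using (hs _).symm
  | @cons u v w h p ih =>
    rw [walkSign_cons, walkSign_cons, ih, hB]
    linear_combination s u * A u v * walkSign A p * s w * hs v

end WalkSign

section Balance

variable {n : ℕ} {G : SimpleGraph (Fin n)} {C : Matrix (Fin n) (Fin n) ℝ}
  (hinv : ∀ i j, G.Adj i j → C i j * C j i = 1)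
  (hcyc : ∀ (u : Fin n) (c : G.Walk u u), c.IsCycle → walkSign C c = 1)
include hinv hcyc

-- A path closed up by one edge is a cycle unless it runs back along that same edge.
lemma walkSign_cons_of_isPath {u v : Fin n} (h : G.Adj u v) {q : G.Walk v u} (hq : q.IsPath) :
    walkSign C (Walk.cons h q) = 1 := by
  by_cases he : s(v, u) ∈ q.edges
  · rw [hq.eq_adj_toWalk_of_mem_edges he]
    simpa using hinv u v h
  · exact hcyc u _ ((Walk.cons_isCycle_iff q h).mpr ⟨hq, by rwa [Sym2.eq_swap]⟩)

lemma walkSign_bypass [DecidableEq (Fin n)] {u v : Fin n} (p : G.Walk u v) :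
    walkSign C p.bypass = walkSign C p := by
  induction p with
  | nil => rfl
  | @cons u v w h p ih =>
    rw [Walk.bypass]
    split_ifs with hu
    · have hsplit := congrArg (walkSign C) (p.bypass.take_spec hu)
      have hloop := walkSign_cons_of_isPath hinv hcyc h (p.bypass_isPath.takeUntil hu)
      rw [walkSign_append] at hsplit
      rw [walkSign_cons] at hloop
      rw [walkSign_cons, ← ih, ← hsplit, ← mul_assoc, hloop, one_mul]
    · rw [walkSign_cons, walkSign_cons, ih]

theorem walkSign_eq_one_of_forall_isCycle {u : Fin n} (w : G.Walk u u) : walkSign C w = 1 := by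
  classical
  rw [← walkSign_bypass hinv hcyc, (Walk.isPath_iff_nil.mp w.bypass_isPath).eq_nil, walkSign_nil]

end Balance

/-- Harary's balance theorem. -/
theorem exists_switching_of_forall_isCycle {n : ℕ} {G : SimpleGraph (Fin n)}
    {C : Matrix (Fin n) (Fin n) ℝ} (hsym : ∀ i j, C i j = C j i)
    (hsq : ∀ i j, G.Adj i j → C i j * C i j = 1)
    (hcyc : ∀ (u : Fin n) (c : G.Walk u u), c.IsCycle → walkSign C c = 1) :
    ∃ s : Fin n → ℝ, (∀ i, s i * s i = 1) ∧ ∀ i j, G.Adj i j → C i j = s i * s j := by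
  have hinv : ∀ i j, G.Adj i j → C i j * C j i = 1 := fun i j h => hsym j i ▸ hsq i j h
  have hreach (i : Fin n) : G.Reachable (G.connectedComponentMk i).out i :=
    ConnectedComponent.exact (G.connectedComponentMk i).out_eq
  set s : Fin n → ℝ := fun i => walkSign C (hreach i).some
  have hs (i : Fin n) : s i * s i = 1 := walkSign_mul_self_eq_one hsq _
  refine ⟨s, hs, fun i j hij => ?_⟩
  have hroot : (G.connectedComponentMk j).out = (G.connectedComponentMk i).out := by
    rw [ConnectedComponent.sound hij.reachable]
  have hloop := walkSign_eq_one_of_forall_isCycle hinv hcyc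
    (((hreach i).some.append (Walk.cons hij (hreach j).some.reverse)).copy rfl hroot)
  rw [walkSign_copy, walkSign_append, walkSign_cons, walkSign_reverse hsym] at hloop
  linear_combination (-C i j) * hs i - C i j * s i * s i * hs j + s i * s j * hloop

namespace IsSignedAdj

variable {n : ℕ} {A : Matrix (Fin n) (Fin n) ℝ}

lemma mul_self_eq_one_s19 (hA : IsSignedAdj A) {i j : Fin n} (h : A i j ≠ 0) : A i j * A i j = 1 :=
  mul_self_eq_one_iff.mpr ((hA.2.2 i j).resolve_left h)

lemma graphOf_adj_iff (hA : IsSignedAdj A) {i j : Fin n} : (graphOf A).Adj i j ↔ A i j ≠ 0 :=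
  ⟨fun h => h.2.1, fun h => ⟨fun hij => h (hij ▸ hA.2.1 i), h, hA.1 i j ▸ h⟩⟩

end IsSignedAdj

/-- Two signed graphs on the same underlying graph are switching equivalent iff
they have the same set of balanced cycles. -/
theorem stmt19 {n : ℕ} (A B : Matrix (Fin n) (Fin n) ℝ)
    (hA : IsSignedAdj A) (hB : IsSignedAdj B)
    (hsupp : ∀ i j, A i j = 0 ↔ B i j = 0) :
    (∃ s : Fin n → ℝ, (∀ i, s i = 1 ∨ s i = -1) ∧ ∀ i j, B i j = s i * A i j * s j) ↔
    (∀ (u : Fin n) (w : (graphOf A).Walk u u), w.IsCycle →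
      (walkSign A w = 1 ↔ walkSign B w = 1)) := by
  constructor
  · rintro ⟨s, hs, hBs⟩ u w -
    have hss : ∀ i, s i * s i = 1 := fun i => mul_self_eq_one_iff.mpr (hs i)
    rw [walkSign_switch hss hBs w, mul_comm, ← mul_assoc, hss, one_mul]
  · intro hcyc
    have hAsq : ∀ i j, (graphOf A).Adj i j → A i j * A i j = 1 := fun i j h =>
      hA.mul_self_eq_one_s19 (hA.graphOf_adj_iff.mp h)
    have hBsq : ∀ i j, (graphOf A).Adj i j → B i j * B i j = 1 := fun i j h =>
      hB.mul_self_eq_one_s19 ((hsupp i j).not.mp (hA.graphOf_adj_iff.mp h))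
    obtain ⟨s, hs, hABs⟩ := exists_switching_of_forall_isCycle (C := A ⊙ B)
      (fun i j => by rw [hadamard_apply, hadamard_apply, hA.1, hB.1])
      (fun i j h => by
        rw [hadamard_apply]
        linear_combination hAsq i j h + A i j * A i j * hBsq i j h)
      (fun u c hc => by
        rw [walkSign_hadamard]
        exact mul_eq_one_of_iff_of_mul_self_eq_one (walkSign_mul_self_eq_one hAsq c)
          (walkSign_mul_self_eq_one hBsq c) (hcyc u c hc))
    refine ⟨s, fun i => mul_self_eq_one_iff.mp (hs i), fun i j => ?_⟩
    by_cases hij : A i j = 0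
    · rw [hij, (hsupp i j).mp hij]
      ring
    · have hadj := hA.graphOf_adj_iff.mpr hij
      have hABij := hABs i j hadj
      rw [hadamard_apply] at hABij
      linear_combination (-B i j) * hAsq i j hadj + A i j * hABij
end
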